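/- arXiv:2006.16513 — 2 statements merged into one kernel-verified Lean document; each statement's English description precedes it below -/
import Mathlib

section
/- Let m = 4k with k ≥ 2 an integer. Define A = {0, 1, ..., k} ∪ {2k, 2k+1, ..., 3k} and B = {k, k+1, ..., 2k} ∪ {3k, 3k+1, ..., 4k-1, 0} as subsets of Z_m. Then A ∪ B = Z_m, A ∩ B = {0, k, 2k, 3k} (so |A ∩ B| = 4), B ≠ A + m/2, and R_A(n) = R_B(n) for all n ∈ Z_m. -/
/-!
`B` is the translate `A + k`, and `A` is invariant under translation by `2k`. Translating a set by
`c` shifts its representation function by `2c`, so `R_B(n) = R_A(n - 2k)`, and `R_A` is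
`2k`-periodic because `A + 2k = A`. Hence `R_A = R_B`, while `A + 2k = A ≠ B` since
`1 ∈ A \ B` for `k ≥ 2`.
-/

open Finset

/-- Representation function: number of ordered pairs (a, a') in A × A with a + a' = n. -/
def repFn {m : ℕ} (A : Finset (ZMod m)) (n : ZMod m) : ℕ :=
  ((A ×ˢ A).filter (fun p => p.1 + p.2 = n)).card

section NatCastIntervals

variable {R : Type*} [AddMonoidWithOne R] [DecidableEq R]

theorem image_add_right_image_natCast_Icc (a b c : ℕ) :
    ((Icc a b).image (Nat.cast : ℕ → R)).image (· + (c : R)) =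
      (Icc (a + c) (b + c)).image (Nat.cast : ℕ → R) := by
  rw [image_image, ← image_add_right_Icc, image_image]
  exact image_congr fun n _ => (Nat.cast_add n c).symm

theorem image_natCast_Icc_add_char (m : ℕ) [CharP R m] (a b : ℕ) :
    (Icc (a + m) (b + m)).image (Nat.cast : ℕ → R) =
      (Icc a b).image (Nat.cast : ℕ → R) := by
  rw [← image_add_right_Icc, image_image]
  exact image_congr fun n _ => by simp

end NatCastIntervals

namespace ZMod

theorem mem_image_natCast_Icc_iff {m : ℕ} [NeZero m] {a b : ℕ} (hb : b < m) (x : ZMod m) :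
    x ∈ (Icc a b).image (Nat.cast : ℕ → ZMod m) ↔ a ≤ x.val ∧ x.val ≤ b := by
  simp only [mem_image, mem_Icc]
  constructor
  · rintro ⟨n, ⟨han, hnb⟩, rfl⟩
    rw [val_cast_of_lt (hnb.trans_lt hb)]
    exact ⟨han, hnb⟩
  · exact fun hx => ⟨x.val, hx, natCast_zmod_val x⟩

theorem card_image_natCast_of_lt {m : ℕ} (s : Finset ℕ) (hs : ∀ n ∈ s, n < m) :
    (s.image (Nat.cast : ℕ → ZMod m)).card = s.card :=
  card_image_of_injOn fun a ha b hb hab => by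
    simpa [val_cast_of_lt (hs a ha), val_cast_of_lt (hs b hb)] using congrArg val hab

theorem eq_natCast_iff_val_eq {m n : ℕ} [NeZero m] (hn : n < m) (x : ZMod m) :
    x = n ↔ x.val = n := by
  rw [← (val_injective m).eq_iff, val_cast_of_lt hn]

end ZMod

section RepFn

variable {m : ℕ} (A : Finset (ZMod m))

theorem repFn_image_add_right (c n : ZMod m) :
    repFn (A.image (· + c)) n = repFn A (n - (c + c)) := by
  unfold repFn
  refine card_nbij' (fun p => (p.1 - c, p.2 - c)) (fun p => (p.1 + c, p.2 + c)) ?_ ?_ ?_ ?_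
  · rintro ⟨_, _⟩ hp
    simp only [coe_filter, mem_product, mem_image, Set.mem_ofPred_eq] at hp ⊢
    obtain ⟨⟨⟨a, ha, rfl⟩, ⟨b, hb, rfl⟩⟩, rfl⟩ := hp
    simp only [add_sub_cancel_right]
    exact ⟨⟨ha, hb⟩, by abel⟩
  · rintro ⟨a, b⟩ hab
    simp only [coe_filter, mem_product, mem_image, Set.mem_ofPred_eq] at hab ⊢
    refine ⟨⟨⟨a, hab.1.1, rfl⟩, ⟨b, hab.1.2, rfl⟩⟩, ?_⟩
    rw [add_add_add_comm, hab.2, sub_add_cancel]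
  · intro p _; simp
  · intro p _; simp

theorem repFn_periodic {c : ZMod m} (h : A.image (· + c) = A) : Function.Periodic (repFn A) c := by
  have hmem : ∀ x, x + c ∈ A ↔ x ∈ A := fun x => by
    conv_lhs => rw [← h]
    simp
  intro n
  unfold repFn
  refine card_nbij' (fun p => (p.1 - c, p.2)) (fun p => (p.1 + c, p.2)) ?_ ?_ ?_ ?_
  · rintro ⟨a, b⟩ hab
    simp only [coe_filter, mem_product, Set.mem_ofPred_eq] at hab ⊢
    refine ⟨⟨(hmem _).1 ?_, hab.1.2⟩, ?_⟩
    · rw [sub_add_cancel]; exact hab.1.1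
    · rw [sub_add_eq_add_sub, hab.2, add_sub_cancel_right]
  · rintro ⟨a, b⟩ hab
    simp only [coe_filter, mem_product, Set.mem_ofPred_eq] at hab ⊢
    exact ⟨⟨(hmem a).2 hab.1.1, hab.1.2⟩, by rw [add_right_comm, hab.2]⟩
  · intro p _; simp
  · intro p _; simp

end RepFn

section TwoBlockSets

def setA (k : ℕ) : Finset (ZMod (4 * k)) :=
  (Icc 0 k).image Nat.cast ∪ (Icc (2 * k) (3 * k)).image Nat.cast

def setB (k : ℕ) : Finset (ZMod (4 * k)) :=
  (Icc k (2 * k)).image Nat.cast ∪ (Icc (3 * k) (4 * k - 1)).image Nat.cast ∪ {0}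

variable {k : ℕ}

theorem mem_setA_iff (hk : 0 < k) (x : ZMod (4 * k)) :
    x ∈ setA k ↔ x.val ≤ k ∨ 2 * k ≤ x.val ∧ x.val ≤ 3 * k := by
  have : NeZero (4 * k) := ⟨by omega⟩
  rw [setA, mem_union, ZMod.mem_image_natCast_Icc_iff (by omega),
    ZMod.mem_image_natCast_Icc_iff (by omega)]
  omega

theorem mem_setB_iff (hk : 0 < k) (x : ZMod (4 * k)) :
    x ∈ setB k ↔ x.val = 0 ∨ k ≤ x.val ∧ x.val ≤ 2 * k ∨ 3 * k ≤ x.val := by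
  have : NeZero (4 * k) := ⟨by omega⟩
  have := x.val_lt
  rw [setB, mem_union, mem_union, ZMod.mem_image_natCast_Icc_iff (by omega),
    ZMod.mem_image_natCast_Icc_iff (by omega), mem_singleton, ← ZMod.val_eq_zero]
  omega

theorem image_add_two_mul_setA (k : ℕ) :
    (setA k).image (· + ((2 * k : ℕ) : ZMod (4 * k))) = setA k := by
  rw [setA, image_union, image_add_right_image_natCast_Icc, image_add_right_image_natCast_Icc,
    show 2 * k + 2 * k = 0 + 4 * k by ring, show 3 * k + 2 * k = k + 4 * k by ring,
    image_natCast_Icc_add_char (4 * k), zero_add, show k + 2 * k = 3 * k by ring, union_comm]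

theorem setB_eq_image_add_setA (k : ℕ) :
    setB k = (setA k).image (· + (k : ZMod (4 * k))) := by
  have hIcc : Icc (2 * k + k) (3 * k + k) = insert (4 * k) (Icc (3 * k) (4 * k - 1)) := by
    ext n; simp only [mem_Icc, mem_insert]; omega
  rw [setA, setB, image_union, image_add_right_image_natCast_Icc,
    image_add_right_image_natCast_Icc, hIcc, image_insert, ZMod.natCast_self, zero_add,
    show k + k = 2 * k by ring]
  ext x
  simp only [mem_union, mem_insert, mem_singleton]
  tauto

theorem setA_inter_setB (hk : 0 < k) :
    setA k ∩ setB k =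
      {0, (k : ZMod (4 * k)), ((2 * k : ℕ) : ZMod (4 * k)), ((3 * k : ℕ) : ZMod (4 * k))} := by
  have : NeZero (4 * k) := ⟨by omega⟩
  ext x
  have := x.val_lt
  simp only [mem_inter, mem_insert, mem_singleton, mem_setA_iff hk, mem_setB_iff hk,
    ← ZMod.val_eq_zero, ZMod.eq_natCast_iff_val_eq (show k < 4 * k by omega),
    ZMod.eq_natCast_iff_val_eq (show 2 * k < 4 * k by omega),
    ZMod.eq_natCast_iff_val_eq (show 3 * k < 4 * k by omega)]
  omega

theorem card_setA_inter_setB (hk : 0 < k) : (setA k ∩ setB k).card = 4 := by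
  have himage : setA k ∩ setB k = ({0, k, 2 * k, 3 * k} : Finset ℕ).image Nat.cast := by
    rw [setA_inter_setB hk]
    simp only [image_insert, image_singleton, Nat.cast_zero]
  rw [himage, ZMod.card_image_natCast_of_lt _ (by simp only [mem_insert, mem_singleton]; omega)]
  repeat rw [card_insert_of_notMem (by simp only [mem_insert, mem_singleton]; omega)]
  rfl

end TwoBlockSets

theorem stmt4 (m k : ℕ) (hk : 2 ≤ k) (hm : m = 4 * k) [NeZero m]
    (A B : Finset (ZMod m))
    (hA : A = (Finset.Icc 0 k).image (Nat.cast : ℕ → ZMod m) ∪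
        (Finset.Icc (2 * k) (3 * k)).image (Nat.cast : ℕ → ZMod m))
    (hB : B = (Finset.Icc k (2 * k)).image (Nat.cast : ℕ → ZMod m) ∪
        (Finset.Icc (3 * k) (4 * k - 1)).image (Nat.cast : ℕ → ZMod m) ∪ {0}) :
    A ∪ B = Finset.univ ∧
    A ∩ B = ({(0 : ZMod m), ((k : ℕ) : ZMod m), ((2 * k : ℕ) : ZMod m), ((3 * k : ℕ) : ZMod m)} : Finset (ZMod m)) ∧
    (A ∩ B).card = 4 ∧
    B ≠ A.image (fun x => x + ((m / 2 : ℕ) : ZMod m)) ∧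
    (∀ n : ZMod m, repFn A n = repFn B n) := by
  subst hm
  obtain rfl : A = setA k := hA
  obtain rfl : B = setB k := hB
  have hk0 : 0 < k := by omega
  refine ⟨?_, setA_inter_setB hk0, card_setA_inter_setB hk0, ?_, fun n => ?_⟩
  · ext x
    have := x.val_lt
    simp only [mem_union, mem_univ, iff_true, mem_setA_iff hk0, mem_setB_iff hk0]
    omega
  · have h1 : ((1 : ℕ) : ZMod (4 * k)).val = 1 := ZMod.val_cast_of_lt (by omega)
    have h1A : ((1 : ℕ) : ZMod (4 * k)) ∈ setA k := by rw [mem_setA_iff hk0, h1]; omega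
    have h1B : ((1 : ℕ) : ZMod (4 * k)) ∉ setB k := by rw [mem_setB_iff hk0, h1]; omega
    rw [show 4 * k / 2 = 2 * k by omega, image_add_two_mul_setA]
    exact fun h => h1B (h ▸ h1A)
  · have h2k : (k : ZMod (4 * k)) + k = ((2 * k : ℕ) : ZMod (4 * k)) := by push_cast; ring
    rw [setB_eq_image_add_setA, repFn_image_add_right, h2k]
    exact ((repFn_periodic _ (image_add_two_mul_setA k)).sub_eq n).symm
end

section
/- Let m ≡ 2 (mod 4), m ≥ 6. Let T ⊆ Z_m with |T| = m - 4, and let a_1, a_2, b_1, b_2 be four distinct elements of Z_m \ T with A = T ∪ {a_1, a_2}, B = T ∪ {b_1, b_2}. If R_A(n) = R_B(n) for all n ∈ Z_m, then a_1 + a_2 = b_1 + b_2 in Z_m. -/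
/-!
Since `R_{Sᶜ}(n) = m - 2|S| + R_S(n)`, equal representation functions of `A` and `B` pass to
their complements `{b₁, b₂}` and `{a₁, a₂}`. If `a₁ + a₂ ≠ b₁ + b₂`, comparing these at
`a₁ + a₂` and at `b₁ + b₂` forces `2b₁ = 2b₂ = a₁ + a₂` and `2a₁ = 2a₂ = b₁ + b₂`. Then
`d = a₂ - a₁ = 2(b₁ - a₁)` is nonzero with `2d = 0`, impossible in `ℤ/m` for `m ≡ 2 (mod 4)`.
-/

open Finset

theorem ZMod.two_mul_eq_zero_of_four_mul_eq_zero {m : ℕ} (hm : m % 4 = 2) {c : ZMod m}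
    (h : 4 * c = 0) : 2 * c = 0 := by
  obtain ⟨j, rfl⟩ : ∃ j, m = 4 * j + 2 := ⟨m / 4, by omega⟩
  have hchar : ((4 * j + 2 : ℕ) : ZMod (4 * j + 2)) = 0 := ZMod.natCast_self _
  push_cast at hchar
  linear_combination c * hchar - (j : ZMod (4 * j + 2)) * h

theorem Finset.union_eq_compl_of_compl_eq_union {α : Type*} [Fintype α] [DecidableEq α]
    {T U V : Finset α} (hT : Tᶜ = U ∪ V) (hUV : Disjoint U V) : T ∪ V = Uᶜ := by
  rw [← compl_compl (T ∪ V), compl_union, hT, union_inter_distrib_right, inter_compl,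
    union_empty, inter_eq_left.2 (subset_compl_iff_disjoint_right.2 hUV)]

section repFn

variable {m : ℕ}

theorem repFn_eq_card_filter (S : Finset (ZMod m)) (n : ZMod m) :
    repFn S n = #{x ∈ S | n - x ∈ S} := by
  refine card_nbij' Prod.fst (fun x => (x, n - x)) ?_ ?_ ?_ ?_
  · rintro ⟨x, y⟩ hxy
    simp only [coe_filter, mem_product, Set.mem_ofPred_eq] at hxy ⊢
    obtain ⟨⟨hx, hy⟩, rfl⟩ := hxy
    exact ⟨hx, by simpa using hy⟩
  · intro x hx
    simp only [coe_filter, Set.mem_ofPred_eq, mem_product] at hx ⊢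
    exact ⟨hx, by ring⟩
  · rintro ⟨x, y⟩ hxy
    simp only [coe_filter, mem_product, Set.mem_ofPred_eq] at hxy
    simp [← hxy.2]
  · intro x _
    rfl

theorem repFn_eq_card_iff (S : Finset (ZMod m)) (n : ZMod m) :
    repFn S n = #S ↔ ∀ x ∈ S, n - x ∈ S := by
  rw [repFn_eq_card_filter, card_filter_eq_iff]

theorem repFn_pair_add {x y : ZMod m} (hxy : x ≠ y) : repFn {x, y} (x + y) = 2 := by
  rw [← card_pair hxy, repFn_eq_card_iff]
  simp

/-- Inclusion–exclusion applied to `S` and its reflection `n - S`. -/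
theorem repFn_compl [NeZero m] (S : Finset (ZMod m)) (n : ZMod m) :
    repFn Sᶜ n + 2 * #S = m + repFn S n := by
  set Q : Finset (ZMod m) := {x | n - x ∈ S}
  have hQ : #Q = #S :=
    card_nbij' (n - ·) (n - ·) (fun x hx ↦ by simpa [Q] using hx) (fun x hx ↦ by simpa [Q] using hx)
      (fun x _ ↦ sub_sub_cancel n x) (fun x _ ↦ sub_sub_cancel n x)
  have hS : repFn S n = #(S ∩ Q) := by
    rw [repFn_eq_card_filter]; congr 1; ext; simp [Q]
  have hSc : repFn Sᶜ n = #(S ∪ Q)ᶜ := by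
    rw [repFn_eq_card_filter]; congr 1; ext; simp [Q]
  have hle : #(S ∪ Q) ≤ Fintype.card (ZMod m) := card_le_univ _
  rw [card_compl] at hSc
  rw [ZMod.card] at hSc hle
  have := card_union_add_card_inter S Q
  omega

theorem add_self_eq_of_repFn_pair_eq {a₁ a₂ b₁ b₂ : ZMod m} (ha : a₁ ≠ a₂) (hb : b₁ ≠ b₂)
    (hne : a₁ + a₂ ≠ b₁ + b₂) (h : repFn {a₁, a₂} (a₁ + a₂) = repFn {b₁, b₂} (a₁ + a₂)) :
    b₁ + b₁ = a₁ + a₂ ∧ b₂ + b₂ = a₁ + a₂ := by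
  rw [repFn_pair_add ha, eq_comm, ← card_pair hb, repFn_eq_card_iff] at h
  have h₁ := h b₁ (by simp)
  have h₂ := h b₂ (by simp)
  simp only [mem_insert, mem_singleton, sub_eq_iff_eq_add] at h₁ h₂
  refine ⟨?_, ?_⟩
  · rcases h₁ with h₁ | h₁
    · exact h₁.symm
    · exact absurd (h₁.trans (add_comm _ _)) hne
  · rcases h₂ with h₂ | h₂
    · exact absurd h₂ hne
    · exact h₂.symm

theorem add_eq_add_of_repFn_pair_eq (hm : m % 4 = 2) {a₁ a₂ b₁ b₂ : ZMod m}
    (ha : a₁ ≠ a₂) (hb : b₁ ≠ b₂) (h : ∀ n, repFn {a₁, a₂} n = repFn {b₁, b₂} n) :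
    a₁ + a₂ = b₁ + b₂ := by
  by_contra hne
  obtain ⟨hb₁, -⟩ := add_self_eq_of_repFn_pair_eq ha hb hne (h _)
  obtain ⟨ha₁, ha₂⟩ := add_self_eq_of_repFn_pair_eq hb ha (Ne.symm hne) (h _).symm
  have h4 : 4 * (b₁ - a₁) = 0 := by linear_combination 2 * hb₁ + ha₂ - ha₁
  have h2 := ZMod.two_mul_eq_zero_of_four_mul_eq_zero hm h4
  exact ha (by linear_combination -h2 + hb₁)

end repFn

theorem stmt16_general (m : ℕ) [NeZero m] (hm : m % 4 = 2)
    (T : Finset (ZMod m)) (hT : T.card = m - 4)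
    (a₁ a₂ b₁ b₂ : ZMod m)
    (hdist : a₁ ≠ a₂ ∧ a₁ ≠ b₁ ∧ a₁ ≠ b₂ ∧ a₂ ≠ b₁ ∧ a₂ ≠ b₂ ∧ b₁ ≠ b₂)
    (ha₁ : a₁ ∉ T) (ha₂ : a₂ ∉ T) (hb₁ : b₁ ∉ T) (hb₂ : b₂ ∉ T)
    (hR : ∀ n : ZMod m,
      repFn (T ∪ {a₁, a₂}) n = repFn (T ∪ {b₁, b₂}) n) :
    a₁ + a₂ = b₁ + b₂ := by
  obtain ⟨ha, h11, h12, h21, h22, hb⟩ := hdist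
  have hdisj : Disjoint ({a₁, a₂} : Finset (ZMod m)) {b₁, b₂} := by
    simp [h11.symm, h12.symm, h21.symm, h22.symm]
  have hTc : Tᶜ = {a₁, a₂} ∪ {b₁, b₂} := by
    refine (eq_of_subset_of_card_le ?_ ?_).symm
    · intro x hx
      simp only [mem_union, mem_insert, mem_singleton] at hx
      rcases hx with (rfl | rfl) | (rfl | rfl) <;> simpa
    · rw [card_union_of_disjoint hdisj, card_pair ha, card_pair hb, card_compl, ZMod.card, hT]
      omega
  have hA := union_eq_compl_of_compl_eq_union (hTc.trans (union_comm _ _)) hdisj.symm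
  have hB := union_eq_compl_of_compl_eq_union hTc hdisj
  refine add_eq_add_of_repFn_pair_eq hm ha hb fun n => ?_
  have hRA := repFn_compl {b₁, b₂} n
  have hRB := repFn_compl {a₁, a₂} n
  rw [← hA, card_pair hb] at hRA
  rw [← hB, card_pair ha] at hRB
  have := hR n
  omega

theorem stmt16 (m : ℕ) [NeZero m] (hm : m % 4 = 2) (hm6 : 6 ≤ m)
    (T : Finset (ZMod m)) (hT : T.card = m - 4)
    (a₁ a₂ b₁ b₂ : ZMod m)
    (hdist : a₁ ≠ a₂ ∧ a₁ ≠ b₁ ∧ a₁ ≠ b₂ ∧ a₂ ≠ b₁ ∧ a₂ ≠ b₂ ∧ b₁ ≠ b₂)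
    (ha₁ : a₁ ∉ T) (ha₂ : a₂ ∉ T) (hb₁ : b₁ ∉ T) (hb₂ : b₂ ∉ T)
    (hR : ∀ n : ZMod m,
      repFn (T ∪ {a₁, a₂}) n = repFn (T ∪ {b₁, b₂}) n) :
    a₁ + a₂ = b₁ + b₂ :=
  stmt16_general m hm T hT a₁ a₂ b₁ b₂ hdist ha₁ ha₂ hb₁ hb₂ hR
end
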